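/- Let k be a field of characteristic zero and π : X → G an augmented rack. Let H := k[G], and let M be the free k-module on G × X, with the H-bimodule structure extending of(g) · (h, x) := (g h, x) and (h, x) · of(g) := (h g, x^g). Let φ : M → H be the k-linear map with φ(h, x) = of(h π(x)) − of(h); let Δ₀ : H → H ⊗ H be the k-linear comultiplication of the group algebra (of(g) ↦ of(g) ⊗ of(g)); and let Δ₁ : M → (M ⊗ H) × (H ⊗ M) be the k-linear map with Δ₁(h, x) = ((h, x) ⊗ of(h π(x)), of(h) ⊗ (h, x)). Then: (i) φ is a bimodule map, φ(of(g) · m · of(g')) = of(g) φ(m) of(g') for all m ∈ M, g, g' ∈ G; (ii) Δ₁ is a map of H-bimodules, where H acts on M ⊗ H and H ⊗ M diagonally through Δ₀ (i.e. of(g)·(m ⊗ u)·of(g') = (of(g)·m·of(g')) ⊗ (of(g) u of(g')) and similarly on H ⊗ M); (iii) (φ ⊗ id) + (id ⊗ φ) applied to Δ₁ equals Δ₀ ∘ φ, i.e. for all m ∈ M, writing Δ₁(m) = (σ, τ) ∈ (M ⊗ H) × (H ⊗ M), one has (φ ⊗ id_H)(σ) + (id_H ⊗ φ)(τ) = Δ₀(φ(m)).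 -/

import Mathlib

noncomputable section

open TensorProduct

variable {k : Type*} [Field k] [CharZero k] {G : Type*} [Group G] {X : Type*}

/-- Left action of `g ∈ G` on the free module `M = k[G × X]`, extending
`of g · (h, x) = (g h, x)`. -/
def Lg (k : Type*) [Field k] {G : Type*} [Group G] {X : Type*} (g : G) :
    ((G × X) →₀ k) →ₗ[k] ((G × X) →₀ k) :=
  Finsupp.lmapDomain k k fun a : G × X => (g * a.1, a.2)

/-- Right action of `g ∈ G` on the free module `M = k[G × X]`, extending
`(h, x) · of g = (h g, x ^ g)`. -/
def Rg (k : Type*) [Field k] {G : Type*} [Group G] {X : Type*}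
    (act : X → G → X) (g : G) : ((G × X) →₀ k) →ₗ[k] ((G × X) →₀ k) :=
  Finsupp.lmapDomain k k fun a : G × X => (a.1 * g, act a.2 g)

/-- The `k`-linear map `φ : M → H = k[G]` with `φ (h, x) = of (h π x) − of h`. -/
def phi (k : Type*) [Field k] {G : Type*} [Group G] {X : Type*} (π : X → G) :
    ((G × X) →₀ k) →ₗ[k] MonoidAlgebra k G :=
  Finsupp.lift (MonoidAlgebra k G) k (G × X) fun a =>
    MonoidAlgebra.of k G (a.1 * π a.2) - MonoidAlgebra.of k G a.1

/-- The comultiplication `Δ₀` of the group algebra `H = k[G]`, `of g ↦ of g ⊗ of g`. -/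
def Delta0 (k : Type*) [Field k] (G : Type*) [Group G] :
    MonoidAlgebra k G →ₗ[k] MonoidAlgebra k G ⊗[k] MonoidAlgebra k G :=
  (Finsupp.lift (MonoidAlgebra k G ⊗[k] MonoidAlgebra k G) k G fun g =>
    MonoidAlgebra.of k G g ⊗ₜ MonoidAlgebra.of k G g) ∘ₗ
    (MonoidAlgebra.coeffLinearEquiv k).toLinearMap

/-- The two-sided coaction `Δ₁ : M → (M ⊗ H) × (H ⊗ M)`,
`(h,x) ↦ ((h,x) ⊗ of (h π x), of h ⊗ (h,x))`. -/
def Delta1 (k : Type*) [Field k] {G : Type*} [Group G] {X : Type*} (π : X → G) :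
    ((G × X) →₀ k) →ₗ[k]
      (((G × X) →₀ k) ⊗[k] MonoidAlgebra k G) ×
        (MonoidAlgebra k G ⊗[k] ((G × X) →₀ k)) :=
  Finsupp.lift _ k (G × X) fun a =>
    (Finsupp.single a 1 ⊗ₜ MonoidAlgebra.of k G (a.1 * π a.2),
      MonoidAlgebra.of k G a.1 ⊗ₜ Finsupp.single a 1)

lemma lift_single_aux {k : Type*} [Semiring k] {Y : Type*} {M : Type*} [AddCommMonoid M]
    [Module k M] (f : Y → M) (a : Y) (c : k) :
    Finsupp.lift M k Y f (Finsupp.single a c) = c • f a := by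
  simp [Finsupp.lift_apply, Finsupp.sum_single_index]

lemma Delta0_single {k : Type*} [Field k] {G : Type*} [Group G] (a : G) (c : k) :
    Delta0 k G (MonoidAlgebra.single a c) =
      c • (MonoidAlgebra.single a (1 : k) ⊗ₜ[k] MonoidAlgebra.single a (1 : k)) :=
  by
  show Finsupp.lift (MonoidAlgebra k G ⊗[k] MonoidAlgebra k G) k G
    (fun g => MonoidAlgebra.of k G g ⊗ₜ MonoidAlgebra.of k G g) (Finsupp.single a c) = _
  rw [lift_single_aux]; rfl

/-- For an augmented rack `π : X → G`, with `H = k[G]`,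
`M = k[G × X]` (an `H`-bimodule via `of g · (h,x) = (gh, x)` and
`(h,x) · of g = (hg, x^g)`), `φ(h,x) = of (h π x) − of h`, `Δ₀` the group-algebra
comultiplication and `Δ₁(h,x) = ((h,x) ⊗ of (h π x), of h ⊗ (h,x))`, one has:
(i) `φ` is a bimodule map; (ii) `Δ₁` is a map of `H`-bimodules, where `H` acts on
`M ⊗ H` and `H ⊗ M` diagonally through `Δ₀`; (iii) `(φ ⊗ id) + (id ⊗ φ)` applied to
`Δ₁` equals `Δ₀ ∘ φ`.  These identities express that `(M → H)` is a bialgebra in the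
Loday–Pirashvili category. -/
theorem augmentedRack_bialgebra_identities
    (act : X → G → X)
    (act_one : ∀ x, act x 1 = x)
    (act_mul : ∀ (x : X) (g h : G), act (act x g) h = act x (g * h))
    (π : X → G)
    (π_act : ∀ (x : X) (g : G), π (act x g) = g⁻¹ * π x * g) :
    -- (i) `φ` is a bimodule map
    (∀ (g g' : G) (m : (G × X) →₀ k),
        phi k π (Lg k g (Rg k act g' m)) =
          MonoidAlgebra.of k G g * phi k π m * MonoidAlgebra.of k G g') ∧
    -- (ii) `Δ₁` is a map of `H`-bimodules
    (∀ (g g' : G) (m : (G × X) →₀ k),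
        Delta1 k π (Lg k g (Rg k act g' m)) =
          (TensorProduct.map ((Lg k g).comp (Rg k act g'))
              ((LinearMap.mulLeft k (MonoidAlgebra.of k G g)).comp
                (LinearMap.mulRight k (MonoidAlgebra.of k G g')))
              (Delta1 k π m).1,
            TensorProduct.map
              ((LinearMap.mulLeft k (MonoidAlgebra.of k G g)).comp
                (LinearMap.mulRight k (MonoidAlgebra.of k G g')))
              ((Lg k g).comp (Rg k act g'))
              (Delta1 k π m).2)) ∧
    -- (iii) `(φ ⊗ id) + (id ⊗ φ)` intertwines `Δ₁` with `Δ₀`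
    (∀ m : (G × X) →₀ k,
        TensorProduct.map (phi k π) LinearMap.id (Delta1 k π m).1 +
            TensorProduct.map LinearMap.id (phi k π) (Delta1 k π m).2 =
          Delta0 k G (phi k π m)) := by
  have key1 : ∀ (g g' : G) (a : G × X) (c : k),
      phi (X := X) k π (Lg k g (Rg k act g' (Finsupp.single a c))) =
        MonoidAlgebra.of k G g * phi k π (Finsupp.single a c) * MonoidAlgebra.of k G g' := by
    intro g g' a c
    simp only [Lg, Rg, phi, Finsupp.lmapDomain_apply, Finsupp.mapDomain_single,
      lift_single_aux, MonoidAlgebra.of_apply,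
      π_act, smul_sub, Finsupp.smul_single, smul_eq_mul, mul_one, mul_sub, sub_mul,
      MonoidAlgebra.single_mul_single, one_mul, mul_assoc, mul_inv_cancel_left,
      smul_mul_assoc, mul_smul_comm]
  have key2 : ∀ (g g' : G) (a : G × X) (c : k),
      Delta1 (X := X) k π (Lg k g (Rg k act g' (Finsupp.single a c))) =
        (TensorProduct.map ((Lg k g).comp (Rg k act g'))
            ((LinearMap.mulLeft k (MonoidAlgebra.of k G g)).comp
              (LinearMap.mulRight k (MonoidAlgebra.of k G g')))
            (Delta1 k π (Finsupp.single a c)).1,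
          TensorProduct.map
            ((LinearMap.mulLeft k (MonoidAlgebra.of k G g)).comp
              (LinearMap.mulRight k (MonoidAlgebra.of k G g')))
            ((Lg k g).comp (Rg k act g'))
            (Delta1 k π (Finsupp.single a c)).2) := by
    intro g g' a c
    simp only [Lg, Rg, Delta1, Finsupp.lmapDomain_apply, Finsupp.mapDomain_single,
      lift_single_aux, MonoidAlgebra.of_apply, π_act, Prod.smul_mk, Prod.smul_fst,
      Prod.smul_snd, TensorProduct.smul_tmul', tmul_smul, TensorProduct.map_tmul,
      LinearMap.comp_apply, LinearMap.mulLeft_apply, LinearMap.mulRight_apply,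
      MonoidAlgebra.single_mul_single, one_mul, mul_one, mul_assoc, mul_inv_cancel_left,
      smul_mul_assoc, mul_smul_comm, Finsupp.smul_single, smul_eq_mul, Prod.mk.injEq]
  have key3 : ∀ (a : G × X) (c : k),
      TensorProduct.map (phi (X := X) k π) LinearMap.id
            (Delta1 k π (Finsupp.single a c)).1 +
          TensorProduct.map LinearMap.id (phi k π)
            (Delta1 k π (Finsupp.single a c)).2 =
        Delta0 k G (phi k π (Finsupp.single a c)) := by
    intro a c
    simp only [Delta1, phi, lift_single_aux, MonoidAlgebra.of_apply, Prod.smul_mk,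
      Prod.smul_fst, Prod.smul_snd, TensorProduct.smul_tmul', tmul_smul, map_smul, map_sub,
      TensorProduct.map_tmul, LinearMap.id_apply, TensorProduct.sub_tmul,
      TensorProduct.tmul_sub, smul_sub, one_smul, Delta0_single]
    abel
  refine ⟨?_, ?_, ?_⟩
  · intro g g' m
    induction m using Finsupp.induction_linear with
    | zero => simp
    | add f h hf hh => simp only [map_add, hf, hh, mul_add, add_mul]
    | single a c => exact key1 g g' a c
  · intro g g' m
    induction m using Finsupp.induction_linear with
    | zero => simp; rfl
    | add f h hf hh =>
        simp only [map_add, hf, hh, Prod.fst_add, Prod.snd_add, Prod.mk_add_mk]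
    | single a c => exact key2 g g' a c
  · intro m
    induction m using Finsupp.induction_linear with
    | zero => simp only [map_zero, Prod.fst_zero, Prod.snd_zero, add_zero]
    | add f h hf hh =>
        simp only [map_add, Prod.fst_add, Prod.snd_add] at hf hh ⊢
        rw [← hf, ← hh]; abel
    | single a c => exact key3 a c

end
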